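/- The multiplicity of the eigenvalue m/2 of the tangential Dirac operator on S³ is (m+1)(m+2): the eigenspinors φ^{+(m,l,k)} for 0 ≤ l ≤ m, 0 ≤ k ≤ m+1 are linearly independent, and there are (m+1)(m+2) of them. -/
import Mathlib

open MvPolynomial

/- Variables: index 0 ↦ z₁, 1 ↦ z₂, 2 ↦ z̄₁, 3 ↦ z̄₂ in `ℂ[z₁, z₂, z̄₁, z̄₂]`. -/

/-- `e₋ = -z̄₂ ∂/∂z₁ + z̄₁ ∂/∂z₂`. -/
noncomputable def eMinus : Derivation ℂ (MvPolynomial (Fin 4) ℂ) (MvPolynomial (Fin 4) ℂ) :=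
  mkDerivation ℂ ![-(X 3), X 2, 0, 0]

noncomputable def ePlus' : Derivation ℂ (MvPolynomial (Fin 4) ℂ) (MvPolynomial (Fin 4) ℂ) :=
  mkDerivation ℂ ![0, 0, X 1, -(X 0)]

noncomputable def hDeg : Derivation ℂ (MvPolynomial (Fin 4) ℂ) (MvPolynomial (Fin 4) ℂ) :=
  mkDerivation ℂ ![X 0, X 1, -(X 2), -(X 3)]

noncomputable def hS : Derivation ℂ (MvPolynomial (Fin 4) ℂ) (MvPolynomial (Fin 4) ℂ) :=
  mkDerivation ℂ ![X 0, 0, 0, X 3]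

lemma bracket_pm : ⁅ePlus', eMinus⁆ = hDeg := by
  apply MvPolynomial.derivation_ext
  intro i
  fin_cases i <;>
    simp [Derivation.commutator_apply, ePlus', eMinus, hDeg, mkDerivation_X]

lemma bracket_hm : ⁅hDeg, eMinus⁆ = (-2 : ℂ) • eMinus := by
  apply MvPolynomial.derivation_ext
  intro i
  fin_cases i <;>
    simp [Derivation.commutator_apply, eMinus, hDeg, mkDerivation_X, smul_eq_C_mul, map_ofNat] <;> ring

lemma bracket_sm : ⁅hS, eMinus⁆ = 0 := by
  apply MvPolynomial.derivation_ext
  intro i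
  fin_cases i <;>
    simp [Derivation.commutator_apply, eMinus, hS, mkDerivation_X]

lemma deriv_pow_eigen (D : Derivation ℂ (MvPolynomial (Fin 4) ℂ) (MvPolynomial (Fin 4) ℂ))
    (x : MvPolynomial (Fin 4) ℂ) (c : ℂ) (h : D x = c • x) (n : ℕ) :
    D (x ^ n) = ((n : ℂ) * c) • x ^ n := by
  induction n with
  | zero => simp
  | succ n ih =>
    rw [pow_succ, Derivation.leibniz, ih, h]
    push_cast
    simp only [smul_eq_mul, smul_eq_C_mul, map_mul, map_add, map_one, map_natCast]
    ring

lemma deriv_prod_eigen (D : Derivation ℂ (MvPolynomial (Fin 4) ℂ) (MvPolynomial (Fin 4) ℂ))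
    (x y : MvPolynomial (Fin 4) ℂ) (c₁ c₂ : ℂ) (hx : D x = c₁ • x) (hy : D y = c₂ • y)
    (a b : ℕ) :
    D (x ^ a * y ^ b) = ((a : ℂ) * c₁ + (b : ℂ) * c₂) • (x ^ a * y ^ b) := by
  rw [Derivation.leibniz, deriv_pow_eigen D x c₁ hx, deriv_pow_eigen D y c₂ hy,
    smul_eq_mul, smul_eq_mul]
  simp only [smul_eq_C_mul, map_mul, map_add, map_natCast]
  ring

/-- `v^k_{(l, m-l)} = (e₋)^k (z₁^l z₂^{m-l})`. -/
noncomputable def v (m l k : ℕ) : MvPolynomial (Fin 4) ℂ :=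
  (fun p => eMinus p)^[k] (X 0 ^ l * X 1 ^ (m - l))

lemma v_succ (m l k : ℕ) : v m l (k+1) = eMinus (v m l k) :=
  Function.iterate_succ_apply' _ _ _

lemma v_zero (m l : ℕ) : v m l 0 = X 0 ^ l * X 1 ^ (m - l) := rfl

lemma hDeg_v (m l : ℕ) (hl : l ≤ m) (k : ℕ) :
    hDeg (v m l k) = ((m : ℂ) - 2 * k) • v m l k := by
  induction k with
  | zero =>
    rw [v_zero, deriv_prod_eigen hDeg (X 0) (X 1) 1 1
      (by simp [hDeg, mkDerivation_X]) (by simp [hDeg, mkDerivation_X])]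
    congr 1
    rw [Nat.cast_sub hl]
    push_cast
    ring
  | succ k ih =>
    have hb := DFunLike.congr_fun bracket_hm (v m l k)
    rw [Derivation.commutator_apply] at hb
    rw [v_succ]
    have h2 : hDeg (eMinus (v m l k)) =
        eMinus (hDeg (v m l k)) + ((-2 : ℂ) • eMinus) (v m l k) := by
      rw [← hb]; abel
    rw [h2, ih, Derivation.map_smul, Derivation.smul_apply, ← v_succ]
    push_cast
    module

lemma hS_v (m l : ℕ) (k : ℕ) :
    hS (v m l k) = (l : ℂ) • v m l k := by
  induction k with
  | zero =>
    rw [v_zero, deriv_prod_eigen hS (X 0) (X 1) 1 0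
      (by simp [hS, mkDerivation_X]) (by simp [hS, mkDerivation_X])]
    congr 1
    ring
  | succ k ih =>
    have hb := DFunLike.congr_fun bracket_sm (v m l k)
    rw [Derivation.commutator_apply] at hb
    have h2 : hS (eMinus (v m l k)) = eMinus (hS (v m l k)) := by
      rw [Derivation.zero_apply] at hb
      exact sub_eq_zero.mp hb
    rw [v_succ, h2, ih, Derivation.map_smul, ← v_succ]

lemma ePlus_v (m l : ℕ) (hl : l ≤ m) (k : ℕ) :
    ePlus' (v m l (k + 1)) = ((k + 1 : ℂ) * ((m : ℂ) - k)) • v m l k := by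
  induction k with
  | zero =>
    have h0 : ePlus' (v m l 0) = 0 := by
      rw [v_zero, deriv_prod_eigen ePlus' (X 0) (X 1) 0 0
        (by simp [ePlus', mkDerivation_X]) (by simp [ePlus', mkDerivation_X])]
      simp
    have hb := DFunLike.congr_fun bracket_pm (v m l 0)
    rw [Derivation.commutator_apply] at hb
    rw [v_succ]
    have : ePlus' (eMinus (v m l 0)) = eMinus (ePlus' (v m l 0)) + hDeg (v m l 0) := by
      rw [← hb]; abel
    rw [this, h0, map_zero, zero_add, hDeg_v m l hl 0]
    push_cast
    module
  | succ k ih =>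
    have hb := DFunLike.congr_fun bracket_pm (v m l (k + 1))
    rw [Derivation.commutator_apply] at hb
    rw [v_succ (m := m) (l := l) (k := k + 1)]
    have : ePlus' (eMinus (v m l (k + 1))) =
        eMinus (ePlus' (v m l (k + 1))) + hDeg (v m l (k + 1)) := by
      rw [← hb]; abel
    rw [this, ih, Derivation.map_smul, hDeg_v m l hl (k + 1), ← v_succ]
    rw [← add_smul]
    congr 1
    push_cast
    ring

lemma v_ne_zero (m l : ℕ) (hl : l ≤ m) : ∀ k ≤ m, v m l k ≠ 0 := by
  intro k
  induction k with
  | zero =>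
    intro _
    rw [v_zero]
    exact mul_ne_zero (pow_ne_zero _ (X_ne_zero _)) (pow_ne_zero _ (X_ne_zero _))
  | succ k ih =>
    intro hk h0
    have hzero : ePlus' (v m l (k + 1)) = 0 := by rw [h0, map_zero]
    rw [ePlus_v m l hl k] at hzero
    have hc : ((k : ℂ) + 1) * ((m : ℂ) - k) ≠ 0 := by
      apply mul_ne_zero
      · exact Nat.cast_add_one_ne_zero k
      · have hkm : (k : ℂ) ≠ (m : ℂ) := by
          exact_mod_cast (Nat.lt_of_succ_le hk).ne
        exact sub_ne_zero.mpr hkm.symm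
    have := smul_eq_zero.mp hzero
    rcases this with h | h
    · exact hc h
    · exact ih (le_of_lt (Nat.lt_of_succ_le hk)) h

/-- The eigenspinor `φ^{+(m,l,k)} = (k v^{k-1}_{(l,m-l)}, -v^k_{(l,m-l)})` (up to
normalization), as a pair of polynomials. -/
noncomputable def phiPlus (m l k : ℕ) :
    MvPolynomial (Fin 4) ℂ × MvPolynomial (Fin 4) ℂ :=
  ((k : ℂ) • v m l (k - 1), -(v m l k))

noncomputable def Aop (m : ℕ) : Module.End ℂ (MvPolynomial (Fin 4) ℂ) :=
  hDeg.toLinearMap + (2 * (m : ℂ) + 3) • hS.toLinearMap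

noncomputable def TDir (m : ℕ) :
    Module.End ℂ (MvPolynomial (Fin 4) ℂ × MvPolynomial (Fin 4) ℂ) :=
  LinearMap.prodMap (Aop m - (2 : ℂ) • LinearMap.id) (Aop m)

lemma Aop_v (m l : ℕ) (hl : l ≤ m) (k : ℕ) :
    Aop m (v m l k) = ((m : ℂ) - 2 * k + (2 * m + 3) * l) • v m l k := by
  simp only [Aop, LinearMap.add_apply, LinearMap.smul_apply, Derivation.coeFn_coe]
  rw [hDeg_v m l hl, hS_v]
  module

lemma Top_phi (m l k : ℕ) (hl : l ≤ m) :
    TDir m (phiPlus m l k) = ((m : ℂ) - 2 * k + (2 * m + 3) * l) • phiPlus m l k := by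
  unfold TDir phiPlus
  apply Prod.ext
  · simp only [LinearMap.prodMap_apply, Prod.smul_mk]
    rcases k with _ | k
    · simp
    · simp only [Nat.add_sub_cancel]
      rw [map_smul, LinearMap.sub_apply, Aop_v m l hl k, LinearMap.smul_apply,
        LinearMap.id_apply]
      push_cast
      module
  · simp only [LinearMap.prodMap_apply, Prod.smul_mk]
    rw [map_neg, Aop_v m l hl k]
    rw [smul_neg]

lemma phi_ne_zero (m l k : ℕ) (hl : l ≤ m) (hk : k ≤ m + 1) : phiPlus m l k ≠ 0 := by
  intro h
  rcases Nat.lt_or_ge k (m + 1) with hk' | hk'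
  · have h2 := congrArg Prod.snd h
    simp only [phiPlus, Prod.snd_zero, neg_eq_zero] at h2
    exact v_ne_zero m l hl k (Nat.lt_succ_iff.mp hk') h2
  · have hkeq : k = m + 1 := le_antisymm hk hk'
    subst hkeq
    have h1 := congrArg Prod.fst h
    simp only [phiPlus, Prod.fst_zero, Nat.add_sub_cancel] at h1
    rcases smul_eq_zero.mp h1 with h | h
    · exact (Nat.cast_ne_zero (R := ℂ)).mpr (Nat.succ_ne_zero m) h
    · exact v_ne_zero m l hl m le_rfl h

lemma mu_inj (m : ℕ) :
    Function.Injective (fun p : Fin (m + 1) × Fin (m + 2) =>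
      (m : ℂ) - 2 * (p.2 : ℕ) + (2 * m + 3) * (p.1 : ℕ)) := by
  have key : ∀ a b x y : ℕ, a ≤ m → b ≤ m → x ≤ m + 1 → y ≤ m + 1 →
      (2 * m + 3) * a + 2 * y = (2 * m + 3) * b + 2 * x → a = b ∧ x = y := by
    intro a b x y _ _ hx hy hEq
    rcases Nat.lt_trichotomy a b with hab | hab | hab
    · exfalso
      have h2 : (2 * m + 3) * a + (2 * m + 3) ≤ (2 * m + 3) * b := by
        calc (2 * m + 3) * a + (2 * m + 3) = (2 * m + 3) * (a + 1) := by ring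
        _ ≤ (2 * m + 3) * b := Nat.mul_le_mul_left _ hab
      have : 2 * y ≤ 2 * m + 2 := by omega
      linarith
    · subst hab
      have := Nat.add_left_cancel hEq
      omega
    · exfalso
      have h2 : (2 * m + 3) * b + (2 * m + 3) ≤ (2 * m + 3) * a := by
        calc (2 * m + 3) * b + (2 * m + 3) = (2 * m + 3) * (b + 1) := by ring
        _ ≤ (2 * m + 3) * a := Nat.mul_le_mul_left _ hab
      have : 2 * x ≤ 2 * m + 2 := by omega
      linarith
  intro p q h
  simp only at h
  have h2 : (((2 * m + 3) * (p.1 : ℕ) + 2 * (q.2 : ℕ) : ℕ) : ℂ) =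
      (((2 * m + 3) * (q.1 : ℕ) + 2 * (p.2 : ℕ) : ℕ) : ℂ) := by
    push_cast
    linear_combination h
  have h3 := Nat.cast_inj.mp h2
  obtain ⟨hA, hB⟩ := key _ _ _ _ (Nat.lt_succ_iff.mp p.1.isLt) (Nat.lt_succ_iff.mp q.1.isLt)
    (Nat.lt_succ_iff.mp p.2.isLt) (Nat.lt_succ_iff.mp q.2.isLt) h3
  exact Prod.ext (Fin.ext hA) (Fin.ext hB)

/-- For fixed `m`, the eigenspinors `φ^{+(m,l,k)}`, `0 ≤ l ≤ m`, `0 ≤ k ≤ m+1`, are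
linearly independent, and there are `(m+1)(m+2)` of them, so the multiplicity of the
eigenvalue `m/2` is `(m+1)(m+2)`. -/
theorem phiPlus_linearIndependent (m : ℕ) :
    LinearIndependent ℂ
      (fun p : Fin (m + 1) × Fin (m + 2) => phiPlus m (p.1 : ℕ) (p.2 : ℕ)) ∧
    Fintype.card (Fin (m + 1) × Fin (m + 2)) = (m + 1) * (m + 2) := by
  constructor
  · apply Module.End.eigenvectors_linearIndependent' (TDir m)
      (fun p : Fin (m + 1) × Fin (m + 2) =>
        (m : ℂ) - 2 * (p.2 : ℕ) + (2 * m + 3) * (p.1 : ℕ))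
      (mu_inj m)
    intro p
    constructor
    · rw [Module.End.mem_eigenspace_iff]
      exact Top_phi m p.1 p.2 (Nat.lt_succ_iff.mp p.1.isLt)
    · exact phi_ne_zero m p.1 p.2 (Nat.lt_succ_iff.mp p.1.isLt) (Nat.lt_succ_iff.mp p.2.isLt)
  · simp
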